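/- Let x ∈ {2, −2} and A = (0 −1; 1 x) ∈ GL₂ℤ. Then S_A = {v ∈ ℤ² : ℤv + ℤ(Av) = ℤ²} equals {(a,b) ∈ ℤ² : a + (x/2)·b = ±1} (for x = 2 this is {(a,b) : (a+b)² = 1}), and the subgroup H_A of GL₂ℤ generated by A and −Id acts transitively on S_A. -/

import Mathlib

open Matrix

abbrev GL2Z := GL (Fin 2) ℤ

/-- `S_A = {v ∈ ℤ² : ℤv + ℤ(Av) = ℤ²}`. -/
def SA (A : GL2Z) : Set (Fin 2 → ℤ) :=
  {v | Submodule.span ℤ {v, (A : Matrix (Fin 2) (Fin 2) ℤ).mulVec v} = ⊤}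

/-- `H_A = ⟨A, -Id⟩ ≤ GL₂ℤ`. -/
def HA (A : GL2Z) : Subgroup GL2Z := Subgroup.closure {A, -1}

/-!
Write `x = 2ε` with `ε = ±1`. The determinant of the pair `(v, Av)` is the quadratic form
`a² + 2εab + b² = (a + εb)²`, so `v ∈ S_A` exactly when `a + εb = ±1`. The element `U = εA` of
`H_A` is unipotent, `(U - 1)² = 0`, hence `Uⁿ = 1 + n(U - 1)` and `Uⁿ (1, 0) = (1 - n, εn)`;
together with `-1` these matrices carry `(1, 0)` to every vector with `a + εb = ±1`.
-/

theorem Matrix.span_range_col_eq_top_iff {n R : Type*} [Fintype n] [DecidableEq n] [CommRing R]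
    (M : Matrix n n R) : Submodule.span R (Set.range M.col) = ⊤ ↔ IsUnit M.det := by
  rw [← range_mulVecLin, LinearMap.range_eq_top, ← isUnit_iff_isUnit_det]
  exact mulVec_surjective_iff_isUnit

theorem span_pair_eq_top_iff {R : Type*} [CommRing R] (v w : Fin 2 → R) :
    Submodule.span R {v, w} = ⊤ ↔ IsUnit (v 0 * w 1 - w 0 * v 1) := by
  have hcol : Set.range (of ![v, w])ᵀ.col = {v, w} := by
    rw [col_transpose]; exact range_cons_cons_empty v w ![]
  rw [← hcol, span_range_col_eq_top_iff, det_fin_two]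
  rfl

theorem Units.val_zpow_eq_one_add_zsmul {R : Type*} [Ring R] (u : Rˣ) (h : ((u : R) - 1) ^ 2 = 0)
    (n : ℤ) : ((u ^ n : Rˣ) : R) = 1 + n • ((u : R) - 1) := by
  set N := (u : R) - 1
  have hu : (u : R) = 1 + N := by simp [N]
  have hN : N * N = 0 := by rw [← sq, h]
  have hinv : ((u⁻¹ : Rˣ) : R) = 1 - N := by
    rw [Units.inv_eq_of_mul_eq_one_right]
    simp only [hu, mul_sub, add_mul, mul_one, one_mul, hN]; abel
  induction n using Int.induction_on with
  | zero => simp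
  | succ n ih =>
    rw [_root_.zpow_add_one, Units.val_mul, ih, hu]
    simp only [mul_add, add_mul, mul_one, one_mul, smul_mul_assoc, hN, smul_zero, add_smul,
      one_smul]
    abel
  | pred n ih =>
    rw [_root_.zpow_sub_one, Units.val_mul, ih, hinv]
    simp only [mul_sub, add_mul, mul_one, one_mul, smul_mul_assoc, hN, smul_zero, sub_smul,
      one_smul]
    abel

theorem mem_SA_iff_isUnit {A : GL2Z} {x : ℤ}
    (hA : (A : Matrix (Fin 2) (Fin 2) ℤ) = !![0, -1; 1, x]) (v : Fin 2 → ℤ) :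
    v ∈ SA A ↔ IsUnit (v 0 ^ 2 + x * v 0 * v 1 + v 1 ^ 2) := by
  rw [SA, Set.mem_ofPred_eq, span_pair_eq_top_iff, hA, mulVec_fin_two]
  simp only [of_apply, cons_val', cons_val_zero, cons_val_one, empty_val', cons_val_fin_one]
  ring_nf

theorem SA_eq_setOf_isUnit {A : GL2Z} {ε : ℤ} (hε : IsUnit ε)
    (hA : (A : Matrix (Fin 2) (Fin 2) ℤ) = !![0, -1; 1, 2 * ε]) :
    SA A = {v | IsUnit (v 0 + ε * v 1)} := by
  ext v
  have hsq : v 0 ^ 2 + 2 * ε * v 0 * v 1 + v 1 ^ 2 = (v 0 + ε * v 1) ^ 2 := by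
    linear_combination (-(v 1) ^ 2) * Int.isUnit_sq hε
  rw [mem_SA_iff_isUnit hA, hsq, isUnit_pow_iff two_ne_zero, Set.mem_ofPred_eq]

theorem self_mem_HA (A : GL2Z) : A ∈ HA A :=
  Subgroup.subset_closure (Set.mem_insert _ _)

theorem neg_one_mem_HA (A : GL2Z) : (-1 : GL2Z) ∈ HA A :=
  Subgroup.subset_closure (Set.mem_insert_of_mem _ rfl)

theorem exists_mem_HA_val_eq {A : GL2Z} {ε : ℤ} (hε : IsUnit ε)
    (hA : (A : Matrix (Fin 2) (Fin 2) ℤ) = !![0, -1; 1, 2 * ε]) :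
    ∃ U ∈ HA A, (U : Matrix (Fin 2) (Fin 2) ℤ) = !![0, -ε; ε, 2] := by
  rcases Int.isUnit_iff.mp hε with rfl | rfl
  · exact ⟨A, self_mem_HA A, by rw [hA]; norm_num⟩
  · refine ⟨-1 * A, mul_mem (neg_one_mem_HA A) (self_mem_HA A), ?_⟩
    rw [neg_one_mul, Units.val_neg, hA]
    ext i j; fin_cases i <;> fin_cases j <;> simp

theorem val_zpow_mulVec_one_zero {U : GL2Z} {ε : ℤ} (hε : IsUnit ε)
    (hU : (U : Matrix (Fin 2) (Fin 2) ℤ) = !![0, -ε; ε, 2]) (n : ℤ) :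
    ((U ^ n : GL2Z) : Matrix (Fin 2) (Fin 2) ℤ) *ᵥ ![1, 0] = ![1 - n, ε * n] := by
  have hN : (U : Matrix (Fin 2) (Fin 2) ℤ) - 1 = !![-1, -ε; ε, 1] := by
    rw [hU]; ext i j; fin_cases i <;> fin_cases j <;> simp
  have hN2 : ((U : Matrix (Fin 2) (Fin 2) ℤ) - 1) ^ 2 = 0 := by
    rw [hN, sq, mul_fin_two]
    ext i j; fin_cases i <;> fin_cases j <;> simp [Int.isUnit_mul_self hε]
  rw [Units.val_zpow_eq_one_add_zsmul U hN2, hN, add_mulVec, smul_mulVec, mulVec_fin_two]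
  ext i; fin_cases i <;> simp [sub_eq_add_neg, mul_comm]

theorem exists_mulVec_eq_of_forall_exists_mulVec_eq {n R : Type*} [Fintype n] [DecidableEq n]
    [Semiring R] (H : Subgroup (GL n R)) (S : Set (n → R)) (e : n → R)
    (h : ∀ v ∈ S, ∃ B ∈ H, (B : Matrix n n R) *ᵥ e = v) :
    ∀ v ∈ S, ∀ w ∈ S, ∃ B ∈ H, (B : Matrix n n R) *ᵥ v = w := by
  intro v hv w hw
  obtain ⟨Bv, hBv_mem, rfl⟩ := h v hv
  obtain ⟨Bw, hBw_mem, rfl⟩ := h w hw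
  refine ⟨Bw * Bv⁻¹, mul_mem hBw_mem (inv_mem hBv_mem), ?_⟩
  rw [mulVec_mulVec, ← Units.val_mul, inv_mul_cancel_right]

theorem exists_mem_HA_mulVec_one_zero_eq {A : GL2Z} {ε : ℤ} (hε : IsUnit ε)
    (hA : (A : Matrix (Fin 2) (Fin 2) ℤ) = !![0, -1; 1, 2 * ε]) {v : Fin 2 → ℤ}
    (hv : IsUnit (v 0 + ε * v 1)) :
    ∃ B ∈ HA A, (B : Matrix (Fin 2) (Fin 2) ℤ) *ᵥ ![1, 0] = v := by
  obtain ⟨U, hU_mem, hU⟩ := exists_mem_HA_val_eq hε hA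
  have hεε := Int.isUnit_mul_self hε
  rcases Int.isUnit_iff.mp hv with hδ | hδ
  · refine ⟨U ^ (ε * v 1), zpow_mem hU_mem _, ?_⟩
    rw [val_zpow_mulVec_one_zero hε hU]
    ext i; fin_cases i
    · show 1 - ε * v 1 = v 0; linear_combination -hδ
    · show ε * (ε * v 1) = v 1; linear_combination v 1 * hεε
  · refine ⟨-1 * U ^ (-(ε * v 1)), mul_mem (neg_one_mem_HA A) (zpow_mem hU_mem _), ?_⟩
    rw [neg_one_mul, Units.val_neg, neg_mulVec, val_zpow_mulVec_one_zero hε hU]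
    ext i; fin_cases i
    · show -(1 - -(ε * v 1)) = v 0; linear_combination -hδ
    · show -(ε * -(ε * v 1)) = v 1; linear_combination v 1 * hεε

theorem case_x_eq_pm_two (x : ℤ) (hx : x = 2 ∨ x = -2) (A : GL2Z)
    (hA : (A : Matrix (Fin 2) (Fin 2) ℤ) = !![0, -1; 1, x]) :
    SA A = {v : Fin 2 → ℤ | v 0 + (x / 2) * v 1 = 1 ∨ v 0 + (x / 2) * v 1 = -1} ∧
    (x = 2 → SA A = {v : Fin 2 → ℤ | (v 0 + v 1) ^ 2 = 1}) ∧
    (∀ v ∈ SA A, ∀ w ∈ SA A,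
      ∃ B ∈ HA A, (B : Matrix (Fin 2) (Fin 2) ℤ).mulVec v = w) := by
  obtain ⟨ε, hε, rfl⟩ : ∃ ε : ℤ, IsUnit ε ∧ x = 2 * ε := by
    rcases hx with rfl | rfl
    exacts [⟨1, isUnit_one, rfl⟩, ⟨-1, isUnit_one.neg, rfl⟩]
  have hSA := SA_eq_setOf_isUnit hε hA
  have hdiv : 2 * ε / 2 = ε := by omega
  refine ⟨?_, fun h2 => ?_, ?_⟩
  · simp only [hSA, hdiv, Int.isUnit_iff]
  · obtain rfl : ε = 1 := by omega
    simp only [hSA, one_mul, sq_eq_one_iff, Int.isUnit_iff]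
  · refine exists_mulVec_eq_of_forall_exists_mulVec_eq _ _ ![1, 0] fun v hv => ?_
    rw [hSA] at hv
    exact exists_mem_HA_mulVec_one_zero_eq hε hA hv
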